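/- Let U ⊆ ℝ be an interval, y: U → ℝ^{n+1} analytic, and let z: U → ℝ^{n+1} be the dual map of y. Then for all x ∈ U: |W_z(x)| ≥ |W_y(x)|^n, where W_y and W_z are the Wronskians of the coordinate functions of y and z respectively. -/

import Mathlib

/-!
Let `Y(x)` and `Z(x)` be the matrices whose rows are the derivatives `y^{(k)}(x)` and
`z^{(j)}(x)`, `0 ≤ j, k ≤ n`. By construction `z ⬝ y^{(k)} = 0` for `k < n` and
`z ⬝ y^{(n)} = W_y`; differentiating the vanishing pairings repeatedly gives
`z^{(j)} ⬝ y^{(k)} = 0` for `j + k < n` and `z^{(j)} ⬝ y^{(k)} = (-1)^j W_y` for `j + k = n`.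
So `Z Yᵀ` vanishes above its antidiagonal, whose entries are `±W_y`, and
`|W_z| |W_y| = |det (Z Yᵀ)| = |W_y|^{n+1}`.
-/

open Filter

noncomputable section

/-- The `(n+1) × (n+1)` matrix whose rows are `y(x), y′(x), …, y^{(n−1)}(x), w`. -/
def borderMatrix {n : ℕ} (y : ℝ → Fin (n + 1) → ℝ) (x : ℝ) (w : Fin (n + 1) → ℝ) :
    Matrix (Fin (n + 1)) (Fin (n + 1)) ℝ :=
  Matrix.of fun i c : Fin (n + 1) =>
    if (i : ℕ) < n then iteratedDeriv (i : ℕ) (fun t => y t c) x else w c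

/-- The Wronskian `W_y(x)`: the determinant of the matrix whose rows are
`y(x), y′(x), …, y^{(n)}(x)`. -/
def Wronski {n : ℕ} (y : ℝ → Fin (n + 1) → ℝ) (x : ℝ) : ℝ :=
  (Matrix.of fun j c : Fin (n + 1) => iteratedDeriv (j : ℕ) (fun t => y t c) x).det

namespace Matrix

theorem det_eq_sign_revPerm_mul_prod_of_antitriangular {R : Type*} [CommRing R] {n : ℕ}
    (M : Matrix (Fin (n + 1)) (Fin (n + 1)) R)
    (hM : ∀ i j : Fin (n + 1), (i : ℕ) + j < n → M i j = 0) :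
    M.det = Equiv.Perm.sign (Fin.revPerm : Equiv.Perm (Fin (n + 1))) * ∏ i, M i i.rev := by
  have hlow : (M.submatrix id Fin.revPerm).IsLowerTriangular := by
    intro i j hij
    exact hM i j.rev (by simp only [Fin.val_rev]; have : (i : ℕ) < j := hij; omega)
  have := det_permute' Fin.revPerm M
  rw [det_of_isLowerTriangular _ hlow] at this
  simp only [submatrix_apply, id, Fin.revPerm_apply] at this
  rw [this, ← mul_assoc, ← Int.cast_mul, ← Units.val_mul, Int.units_mul_self, Units.val_one,
    Int.cast_one, one_mul]

end Matrix

theorem AnalyticAt.matrix_det {𝕜 E ι : Type*} [NontriviallyNormedField 𝕜] [NormedAddCommGroup E]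
    [NormedSpace 𝕜 E] [Fintype ι] [DecidableEq ι] {A : E → Matrix ι ι 𝕜} {x : E}
    (hA : ∀ i j, AnalyticAt 𝕜 (fun t => A t i j) x) : AnalyticAt 𝕜 (fun t => (A t).det) x := by
  simp only [Matrix.det_apply, Units.smul_def, zsmul_eq_mul]
  fun_prop

theorem AnalyticAt.hasDerivAt_iteratedDeriv {𝕜 F : Type*} [NontriviallyNormedField 𝕜]
    [NormedAddCommGroup F] [NormedSpace 𝕜 F] [CompleteSpace F] {f : 𝕜 → F} {t : 𝕜}
    (hf : AnalyticAt 𝕜 f t) (j : ℕ) :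
    HasDerivAt (iteratedDeriv j f) (iteratedDeriv (j + 1) f t) t := by
  have := (hf.iterated_deriv j).differentiableAt.hasDerivAt
  rwa [← iteratedDeriv_eq_iterate, ← iteratedDeriv_succ] at this

def iteratedDerivCoord {ι : Type*} (f : ℝ → ι → ℝ) (k : ℕ) (t : ℝ) : ι → ℝ :=
  fun c => iteratedDeriv k (fun s => f s c) t

@[simp]
theorem iteratedDerivCoord_zero {ι : Type*} (f : ℝ → ι → ℝ) : iteratedDerivCoord f 0 = f := by
  ext t c
  simp [iteratedDerivCoord]

open Matrix

section

variable {ι : Type*} [Fintype ι] {f g : ℝ → ι → ℝ}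

theorem hasDerivAt_iteratedDerivCoord_dotProduct {t : ℝ}
    (hf : ∀ c, AnalyticAt ℝ (fun s => f s c) t) (hg : ∀ c, AnalyticAt ℝ (fun s => g s c) t)
    (j k : ℕ) :
    HasDerivAt (fun s => iteratedDerivCoord f j s ⬝ᵥ iteratedDerivCoord g k s)
      (iteratedDerivCoord f (j + 1) t ⬝ᵥ iteratedDerivCoord g k t +
        iteratedDerivCoord f j t ⬝ᵥ iteratedDerivCoord g (k + 1) t) t := by
  simp only [dotProduct, ← Finset.sum_add_distrib]
  exact HasDerivAt.fun_sum fun c _ =>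
    ((hf c).hasDerivAt_iteratedDeriv j).mul ((hg c).hasDerivAt_iteratedDeriv k)

theorem iteratedDerivCoord_succ_dotProduct_of_eqOn_zero {U : Set ℝ} (hU : IsOpen U)
    (hf : ∀ c, AnalyticOnNhd ℝ (fun s => f s c) U) (hg : ∀ c, AnalyticOnNhd ℝ (fun s => g s c) U)
    {j k : ℕ} (h : ∀ t ∈ U, iteratedDerivCoord f j t ⬝ᵥ iteratedDerivCoord g k t = 0)
    {t : ℝ} (ht : t ∈ U) :
    iteratedDerivCoord f (j + 1) t ⬝ᵥ iteratedDerivCoord g k t =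
      -(iteratedDerivCoord f j t ⬝ᵥ iteratedDerivCoord g (k + 1) t) := by
  have hzero : HasDerivAt (fun s => iteratedDerivCoord f j s ⬝ᵥ iteratedDerivCoord g k s) 0 t :=
    (hasDerivAt_const t 0).congr_of_eventuallyEq (eventually_of_mem (hU.mem_nhds ht) h)
  have := (hasDerivAt_iteratedDerivCoord_dotProduct (fun c => hf c t ht) (fun c => hg c t ht)
    j k).unique hzero
  linarith

end

section Dual

variable {n : ℕ} {y z : ℝ → Fin (n + 1) → ℝ}
  (hz : ∀ (x : ℝ) (w : Fin (n + 1) → ℝ), ∑ c, z x c * w c = (borderMatrix y x w).det)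
include hz

theorem dual_apply_eq_det_borderMatrix_single (t : ℝ) (c : Fin (n + 1)) :
    z t c = (borderMatrix y t (Pi.single c 1)).det := by
  simpa [Pi.single_apply] using hz t (Pi.single c 1)

theorem analyticOnNhd_dual {U : Set ℝ} (hy : ∀ c, AnalyticOnNhd ℝ (fun t => y t c) U)
    (c : Fin (n + 1)) : AnalyticOnNhd ℝ (fun t => z t c) U := by
  intro t ht
  simp only [dual_apply_eq_det_borderMatrix_single hz]
  refine AnalyticAt.matrix_det fun i d => ?_
  simp only [borderMatrix, of_apply]
  split_ifs
  · rw [iteratedDeriv_eq_iterate]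
    exact ((hy d).iterated_deriv _) t ht
  · exact analyticAt_const

theorem dual_dotProduct_iteratedDerivCoord (t : ℝ) {k : ℕ} (hk : k ≤ n) :
    z t ⬝ᵥ iteratedDerivCoord y k t = if k < n then 0 else Wronski y t := by
  rw [dotProduct, hz]
  split_ifs with hkn
  · exact det_zero_of_row_eq (i := ⟨k, by omega⟩) (j := Fin.last n)
      (Fin.ne_of_val_ne (by simp only [Fin.val_last]; omega))
      (by ext c; simp [borderMatrix, hkn, iteratedDerivCoord])
  · obtain rfl : k = n := by omega
    congr 1
    ext i c
    simp only [borderMatrix, of_apply, iteratedDerivCoord]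
    split_ifs with hi
    · rfl
    · rw [show (i : ℕ) = k by omega]

theorem iteratedDerivCoord_dual_dotProduct {U : Set ℝ} (hU : IsOpen U)
    (hy : ∀ c, AnalyticOnNhd ℝ (fun t => y t c) U) (j : ℕ) :
    ∀ k, j + k ≤ n → ∀ t ∈ U, iteratedDerivCoord z j t ⬝ᵥ iteratedDerivCoord y k t =
      if j + k < n then 0 else (-1) ^ j * Wronski y t := by
  induction j with
  | zero =>
    intro k hk t _
    simpa using dual_dotProduct_iteratedDerivCoord hz t (k := k) (by omega)
  | succ j ih =>
    intro k hk t ht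
    have hvanish : ∀ s ∈ U, iteratedDerivCoord z j s ⬝ᵥ iteratedDerivCoord y k s = 0 :=
      fun s hs => by simpa [show j + k < n by omega] using ih k (by omega) s hs
    rw [iteratedDerivCoord_succ_dotProduct_of_eqOn_zero hU (analyticOnNhd_dual hz hy) hy hvanish ht,
      ih (k + 1) (by omega) t ht]
    split_ifs <;> first | omega | ring

theorem abs_wronski_dual_mul_abs_wronski {U : Set ℝ} (hU : IsOpen U)
    (hy : ∀ c, AnalyticOnNhd ℝ (fun t => y t c) U) {t : ℝ} (ht : t ∈ U) :
    |Wronski z t| * |Wronski y t| = |Wronski y t| ^ (n + 1) := by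
  let Z : Matrix (Fin (n + 1)) (Fin (n + 1)) ℝ := of fun j => iteratedDerivCoord z j t
  let Y : Matrix (Fin (n + 1)) (Fin (n + 1)) ℝ := of fun k => iteratedDerivCoord y k t
  have hentry (j k : Fin (n + 1)) (hjk : (j : ℕ) + k ≤ n) :
      (Z * Yᵀ) j k = if (j : ℕ) + k < n then 0 else (-1) ^ (j : ℕ) * Wronski y t :=
    iteratedDerivCoord_dual_dotProduct hz hU hy j k hjk t ht
  have hdet : Wronski z t * Wronski y t =
      Equiv.Perm.sign (Fin.revPerm : Equiv.Perm (Fin (n + 1))) *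
        ∏ i : Fin (n + 1), (-1) ^ (i : ℕ) * Wronski y t := by
    calc Wronski z t * Wronski y t = (Z * Yᵀ).det := by rw [det_mul, det_transpose]; rfl
      _ = _ := by
        rw [det_eq_sign_revPerm_mul_prod_of_antitriangular _ fun j k hjk => by
          simpa [hjk] using hentry j k hjk.le]
        congr 1
        refine Finset.prod_congr rfl fun i _ => ?_
        rw [hentry i i.rev (by rw [Fin.val_rev]; omega), if_neg (by rw [Fin.val_rev]; omega)]
  rw [← abs_mul, hdet, abs_mul, abs_unit_intCast, one_mul, Finset.abs_prod]
  simp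

end Dual

theorem wronskian_dual_lower_bound_general {n : ℕ} (hn : 1 ≤ n)
    (U : Set ℝ) (hU : IsOpen U)
    (y : ℝ → Fin (n + 1) → ℝ) (hy : ∀ c, AnalyticOnNhd ℝ (fun t => y t c) U)
    (z : ℝ → Fin (n + 1) → ℝ)
    (hz : ∀ (x : ℝ) (w : Fin (n + 1) → ℝ),
      ∑ c, z x c * w c = (borderMatrix y x w).det) :
    ∀ x ∈ U, |Wronski y x| ^ n ≤ |Wronski z x| := by
  intro x hx
  have key := abs_wronski_dual_mul_abs_wronski hz hU hy hx
  rcases (abs_nonneg (Wronski y x)).eq_or_lt with hzero | hpos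
  · rw [← hzero, zero_pow (by omega)]
    exact abs_nonneg _
  · rw [pow_succ] at key
    exact (mul_right_cancel₀ hpos.ne' key).ge

/-- **Lemma 7.4**: if `z` is the dual map of `y`, i.e.
`z(x) ⬝ w = det(y(x), y′(x), …, y^{(n−1)}(x), w)` for all `w`, then
`|W_z(x)| ≥ |W_y(x)|^n` for all `x ∈ U`. -/
theorem wronskian_dual_lower_bound {n : ℕ} (hn : 1 ≤ n)
    (U : Set ℝ) (hU : IsOpen U) (hconn : U.OrdConnected)
    (y : ℝ → Fin (n + 1) → ℝ) (hy : ∀ c, AnalyticOnNhd ℝ (fun t => y t c) U)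
    (z : ℝ → Fin (n + 1) → ℝ)
    (hz : ∀ (x : ℝ) (w : Fin (n + 1) → ℝ),
      ∑ c, z x c * w c = (borderMatrix y x w).det) :
    ∀ x ∈ U, |Wronski y x| ^ n ≤ |Wronski z x| :=
  wronskian_dual_lower_bound_general hn U hU y hy z hz
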